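/- arXiv:2408.16973 — 7 statements merged into one kernel-verified Lean document; each statement's English description precedes it below -/
import Mathlib

section
/- Let m ≥ 1 be an integer, and for r > 0 set h₁^m(r) = 2r^m/(r^{2m}+1), h₃^m(r) = (r^{2m}−1)/(r^{2m}+1). Define the first-order operators L_m f = f′ + (m h₃^m/r) f and L_m* f = −f′ + ((m h₃^m − 1)/r) f. Then for every twice differentiable function f : (0,∞) → ℂ and every r > 0: L_m*(L_m f)(r) = −f″(r) − (1/r) f′(r) + (m²/r²)(1 − 2 (h₁^m(r))²) f(r). That is, H_m = L_m* L_m. -/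
/-!
For `L = ∂ + V` and `L* = -∂ + W` one has `L* L f = -f'' + (W - V) f' + (W V - V') f`.
Here `V = m h₃/r` and `W = V - 1/r`, and `h₃' = m h₁²/r` gives `V' = (m² h₁² - m h₃)/r²`,
so `W V - V' = m² (h₃² - h₁²)/r² = m² (1 - 2 h₁²)/r²` by `h₁² + h₃² = 1`.
-/

open Set

noncomputable def groundStateH1 (m : ℕ) (s : ℝ) : ℝ := 2 * s ^ m / (s ^ (2 * m) + 1)

noncomputable def groundStateH3 (m : ℕ) (s : ℝ) : ℝ := (s ^ (2 * m) - 1) / (s ^ (2 * m) + 1)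

theorem pow_two_mul_add_one_pos (m : ℕ) (s : ℝ) : 0 < s ^ (2 * m) + 1 := by
  have := (even_two_mul m).pow_nonneg s
  linarith

theorem groundStateH1_sq_add_groundStateH3_sq (m : ℕ) (s : ℝ) :
    groundStateH1 m s ^ 2 + groundStateH3 m s ^ 2 = 1 := by
  have hD := (pow_two_mul_add_one_pos m s).ne'
  unfold groundStateH1 groundStateH3
  field_simp
  ring

theorem hasDerivAt_groundStateH3 (m : ℕ) {r : ℝ} (hr : r ≠ 0) :
    HasDerivAt (groundStateH3 m) (m * groundStateH1 m r ^ 2 / r) r := by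
  -- `hasDerivAt_pow` has the exponent `2 * m - 1`, which truncates at `m = 0`
  obtain rfl | hm := Nat.eq_zero_or_pos m
  · have h0 : groundStateH3 0 = fun _ => 0 := by funext s; simp [groundStateH3]
    simpa [h0] using hasDerivAt_const r (0 : ℝ)
  have hD := (pow_two_mul_add_one_pos m r).ne'
  have hpow := hasDerivAt_pow (2 * m) r
  refine ((hpow.sub_const 1).fun_div (hpow.add_const 1) hD).congr_deriv ?_
  have hpred : r ^ (2 * m) = r ^ (2 * m - 1) * r := by
    rw [← pow_succ, Nat.sub_add_cancel (by omega)]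
  have hsq : (r ^ m) ^ 2 = r ^ (2 * m - 1) * r := by rw [← pow_mul, mul_comm, hpred]
  unfold groundStateH1
  rw [div_pow, mul_pow, hsq, hpred]
  rw [hpred] at hD
  field_simp
  push_cast
  ring

theorem neg_deriv_add_mul_comp_deriv_add_mul {V W : ℝ → ℝ} {V' r : ℝ} {f : ℝ → ℂ}
    (hV : HasDerivAt V V' r) (hf : DifferentiableAt ℝ f r)
    (hf' : DifferentiableAt ℝ (deriv f) r) :
    -deriv (fun s => deriv f s + (V s : ℂ) * f s) r + (W r : ℂ) * (deriv f r + V r * f r)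
      = -deriv (deriv f) r + ((W r - V r : ℝ) : ℂ) * deriv f r
        + ((W r * V r - V' : ℝ) : ℂ) * f r := by
  rw [(hf'.hasDerivAt.fun_add (hV.ofReal_comp.fun_mul hf.hasDerivAt)).deriv]
  push_cast
  ring

theorem H_factorization_general (m : ℕ) (f : ℝ → ℂ)
    (hf : ∀ s ∈ Ioi (0:ℝ), DifferentiableAt ℝ f s)
    (hf' : ∀ s ∈ Ioi (0:ℝ), DifferentiableAt ℝ (deriv f) s)
    (r : ℝ) (hr : 0 < r) :
    let h1 : ℝ → ℝ := fun s => 2*s^m/(s^(2*m)+1)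
    let h3 : ℝ → ℝ := fun s => (s^(2*m)-1)/(s^(2*m)+1)
    let L : (ℝ → ℂ) → ℝ → ℂ := fun g s => deriv g s + (((m:ℝ) * h3 s / s : ℝ) : ℂ) * g s
    let Lstar : (ℝ → ℂ) → ℝ → ℂ :=
      fun g s => - deriv g s + ((((m:ℝ) * h3 s - 1) / s : ℝ) : ℂ) * g s
    Lstar (L f) r
      = - deriv (deriv f) r - (1/(r:ℂ)) * deriv f r
        + ((((m:ℝ)^2/r^2) * (1 - 2*(h1 r)^2) : ℝ) : ℂ) * f r := by
  intro h1 h3 L Lstar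
  have hV : HasDerivAt (fun s => m * groundStateH3 m s / s)
      ((m ^ 2 * groundStateH1 m r ^ 2 - m * groundStateH3 m r) / r ^ 2) r := by
    refine (((hasDerivAt_groundStateH3 m hr.ne').const_mul (m : ℝ)).fun_div (hasDerivAt_id r)
      hr.ne').congr_deriv ?_
    simp only [id]
    field_simp
  have hpyth := groundStateH1_sq_add_groundStateH3_sq m r
  refine (neg_deriv_add_mul_comp_deriv_add_mul (W := fun s => (m * groundStateH3 m s - 1) / s)
    hV (hf r hr) (hf' r hr)).trans ?_
  have hW : (m * groundStateH3 m r - 1) / r - m * groundStateH3 m r / r = -(1 / r) := by ring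
  have hH : (m * groundStateH3 m r - 1) / r * (m * groundStateH3 m r / r)
      - (m ^ 2 * groundStateH1 m r ^ 2 - m * groundStateH3 m r) / r ^ 2
      = m ^ 2 / r ^ 2 * (1 - 2 * groundStateH1 m r ^ 2) := by
    field_simp
    linear_combination (m : ℝ) ^ 2 * hpyth
  have h1r : h1 r = groundStateH1 m r := rfl
  rw [hW, hH, h1r]
  push_cast
  ring

/-- The factorization `H_m = L_m* L_m` of the linearized operator around the
`m`-equivariant harmonic map ground state. -/
theorem H_factorization (m : ℕ) (hm : 1 ≤ m) (f : ℝ → ℂ)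
    (hf : ∀ s ∈ Ioi (0:ℝ), DifferentiableAt ℝ f s)
    (hf' : ∀ s ∈ Ioi (0:ℝ), DifferentiableAt ℝ (deriv f) s)
    (r : ℝ) (hr : 0 < r) :
    let h1 : ℝ → ℝ := fun s => 2*s^m/(s^(2*m)+1)
    let h3 : ℝ → ℝ := fun s => (s^(2*m)-1)/(s^(2*m)+1)
    let L : (ℝ → ℂ) → ℝ → ℂ := fun g s => deriv g s + (((m:ℝ) * h3 s / s : ℝ) : ℂ) * g s
    let Lstar : (ℝ → ℂ) → ℝ → ℂ :=
      fun g s => - deriv g s + ((((m:ℝ) * h3 s - 1) / s : ℝ) : ℂ) * g s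
    Lstar (L f) r
      = - deriv (deriv f) r - (1/(r:ℂ)) * deriv f r
        + ((((m:ℝ)^2/r^2) * (1 - 2*(h1 r)^2) : ℝ) : ℂ) * f r :=
  H_factorization_general m f hf hf' r hr
end

section
/- Let m ≥ 1 be an integer, and for r > 0 set h₁^m(r) = 2r^m/(r^{2m}+1), h₃^m(r) = (r^{2m}−1)/(r^{2m}+1). Define L_m f = f′ + (m h₃^m/r) f and L_m* f = −f′ + ((m h₃^m − 1)/r) f. Then for every twice differentiable function f : (0,∞) → ℂ and every r > 0: L_m(L_m* f)(r) = −f″(r) − (1/r) f′(r) + ((1 + m² − 2 m h₃^m(r))/r²) f(r). That is, the conjugate operator H̃_m = L_m L_m* has potential Ṽ_m(r) = (1 + m² − 2 m h₃^m(r))/r². -/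
open Set

/-!
Writing `L_m = ∂ + a` and `L_m* = -∂ + b`, the product rule gives
`L_m L_m* f = -f'' + (b - a) f' + (b' + a b) f` with `b - a = -1/r`. The potential
`b' + a b` collapses to `(1 + m² - 2m h₃)/r²` because `h₃` solves the Riccati equation
`r h₃' = m (1 - h₃²)` (that is, `h₃' = m h₁²/r`).
-/

noncomputable section

def h₃ (m : ℕ) (s : ℝ) : ℝ := (s ^ (2 * m) - 1) / (s ^ (2 * m) + 1)

def firstOrderOp (a : ℝ → ℝ) (g : ℝ → ℂ) (s : ℝ) : ℂ := deriv g s + (a s : ℂ) * g s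

def adjointFirstOrderOp (b : ℝ → ℝ) (g : ℝ → ℂ) (s : ℝ) : ℂ := -deriv g s + (b s : ℂ) * g s

end

theorem firstOrderOp_adjointFirstOrderOp_apply (a : ℝ → ℝ) {b : ℝ → ℝ} {b' r : ℝ}
    {f : ℝ → ℂ} (hb : HasDerivAt b b' r) (hf : DifferentiableAt ℝ f r)
    (hf' : DifferentiableAt ℝ (deriv f) r) :
    firstOrderOp a (adjointFirstOrderOp b f) r
      = -deriv (deriv f) r + ((b r - a r : ℝ) : ℂ) * deriv f r
        + ((b' + a r * b r : ℝ) : ℂ) * f r := by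
  have hderiv : HasDerivAt (adjointFirstOrderOp b f)
      (-deriv (deriv f) r + ((b' : ℂ) * f r + (b r : ℂ) * deriv f r)) r :=
    hf'.hasDerivAt.neg.add (hb.ofReal_comp.mul hf.hasDerivAt)
  simp only [firstOrderOp, hderiv.deriv, adjointFirstOrderOp]
  push_cast
  ring

theorem hasDerivAt_pow_eq_mul_div (n : ℕ) {r : ℝ} (hr : r ≠ 0) :
    HasDerivAt (fun s : ℝ => s ^ n) (n * r ^ n / r) r := by
  refine (hasDerivAt_pow n r).congr_deriv ?_
  rcases n with _ | n
  · simp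
  · rw [Nat.add_sub_cancel, pow_succ]
    field_simp

theorem hasDerivAt_h₃ (m : ℕ) {r : ℝ} (hr : r ≠ 0) :
    HasDerivAt (h₃ m) (m * (1 - h₃ m r ^ 2) / r) r := by
  have hpow := hasDerivAt_pow_eq_mul_div (2 * m) hr
  have hden : r ^ (2 * m) + 1 ≠ 0 := by
    rw [pow_mul]
    positivity
  refine ((hpow.sub_const 1).div (hpow.add_const 1) hden).congr_deriv ?_
  unfold h₃
  field_simp
  push_cast
  ring

theorem Htilde_factorization_general (m : ℕ) (f : ℝ → ℂ)
    (hf : ∀ s ∈ Ioi (0:ℝ), DifferentiableAt ℝ f s)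
    (hf' : ∀ s ∈ Ioi (0:ℝ), DifferentiableAt ℝ (deriv f) s)
    (r : ℝ) (hr : 0 < r) :
    let h3 : ℝ → ℝ := fun s => (s^(2*m)-1)/(s^(2*m)+1)
    let L : (ℝ → ℂ) → ℝ → ℂ := fun g s => deriv g s + (((m:ℝ) * h3 s / s : ℝ) : ℂ) * g s
    let Lstar : (ℝ → ℂ) → ℝ → ℂ :=
      fun g s => - deriv g s + ((((m:ℝ) * h3 s - 1) / s : ℝ) : ℂ) * g s
    L (Lstar f) r
      = - deriv (deriv f) r - (1/(r:ℂ)) * deriv f r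
        + (((1 + (m:ℝ)^2 - 2*(m:ℝ)*h3 r)/r^2 : ℝ) : ℂ) * f r := by
  intro h3 L Lstar
  have hb : HasDerivAt (fun s => ((m : ℝ) * h₃ m s - 1) / s)
      ((m * (m * (1 - h₃ m r ^ 2) / r) * r - (m * h₃ m r - 1) * 1) / r ^ 2) r :=
    (((hasDerivAt_h₃ m hr.ne').const_mul (m : ℝ)).sub_const 1).div (hasDerivAt_id' r) hr.ne'
  change firstOrderOp (fun s => m * h₃ m s / s)
      (adjointFirstOrderOp (fun s => (m * h₃ m s - 1) / s) f) r
    = -deriv (deriv f) r - 1 / (r : ℂ) * deriv f r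
      + (((1 + (m : ℝ) ^ 2 - 2 * m * h₃ m r) / r ^ 2 : ℝ) : ℂ) * f r
  rw [firstOrderOp_adjointFirstOrderOp_apply _ hb (hf r hr) (hf' r hr)]
  have hfirst : ((m : ℝ) * h₃ m r - 1) / r - m * h₃ m r / r = -(1 / r) := by
    field_simp
    ring
  have hpotential : (m * (m * (1 - h₃ m r ^ 2) / r) * r - (m * h₃ m r - 1) * 1) / r ^ 2
      + m * h₃ m r / r * ((m * h₃ m r - 1) / r) = (1 + (m : ℝ) ^ 2 - 2 * m * h₃ m r) / r ^ 2 := by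
    field_simp
    ring
  rw [hfirst, hpotential]
  push_cast
  ring

/-- The conjugate operator `H̃_m = L_m L_m*` has potential `(1 + m² − 2m h₃^m)/r²`. -/
theorem Htilde_factorization (m : ℕ) (hm : 1 ≤ m) (f : ℝ → ℂ)
    (hf : ∀ s ∈ Ioi (0:ℝ), DifferentiableAt ℝ f s)
    (hf' : ∀ s ∈ Ioi (0:ℝ), DifferentiableAt ℝ (deriv f) s)
    (r : ℝ) (hr : 0 < r) :
    let h3 : ℝ → ℝ := fun s => (s^(2*m)-1)/(s^(2*m)+1)
    let L : (ℝ → ℂ) → ℝ → ℂ := fun g s => deriv g s + (((m:ℝ) * h3 s / s : ℝ) : ℂ) * g s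
    let Lstar : (ℝ → ℂ) → ℝ → ℂ :=
      fun g s => - deriv g s + ((((m:ℝ) * h3 s - 1) / s : ℝ) : ℂ) * g s
    L (Lstar f) r
      = - deriv (deriv f) r - (1/(r:ℂ)) * deriv f r
        + (((1 + (m:ℝ)^2 - 2*(m:ℝ)*h3 r)/r^2 : ℝ) : ℂ) * f r :=
  Htilde_factorization_general m f hf hf' r hr
end

section
/- For r > 0 let h₁(r) = 2r²/(r⁴+1), let H be the operator (Hf)(r) = −f″(r) − (1/r) f′(r) + (4/r²)(1 − 2 h₁(r)²) f(r), and define θ₀(r) = (−r⁸ + r⁴ − 8 r⁴ log r + 1)/(8 (r⁶ + r²)). Then H θ₀ = 0 on (0,∞), and the Wronskian normalization r ( h₁′(r) θ₀(r) − h₁(r) θ₀′(r) ) = 1 holds for every r > 0. -/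
/-!
Reduction of order. If `h` solves `-h'' - h'/r + V h = 0` and does not vanish, then for any
primitive `u` of `-1/(r h²)` the product `θ = h u` is a second solution, and
`r (h' θ - h θ') = -r h² u' = 1`. For `h = h₁` one has
`1/(r h₁²) = r³/4 + 1/(2r) + r⁻⁵/4`, whose primitives are elementary, and `θ₀ = h₁ u` for one
of them.
-/

open Set Filter

section ReductionOfOrder

variable {V h h' h'' u : ℝ → ℝ}

theorem hasDerivAt_reductionOfOrder {r : ℝ} (hhr : h r ≠ 0)
    (hh : HasDerivAt h (h' r) r) (hu : HasDerivAt u (-1 / (r * h r ^ 2)) r) :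
    HasDerivAt (fun x => h x * u x) (h' r * u r - (r * h r)⁻¹) r :=
  (hh.fun_mul hu).congr_deriv (by field_simp; ring)

theorem hasDerivAt_reductionOfOrder_deriv {r : ℝ} (hr : r ≠ 0) (hhr : h r ≠ 0)
    (hh : HasDerivAt h (h' r) r) (hh' : HasDerivAt h' (h'' r) r)
    (hu : HasDerivAt u (-1 / (r * h r ^ 2)) r) :
    HasDerivAt (fun x => h' x * u x - (x * h x)⁻¹) (h'' r * u r + (r ^ 2 * h r)⁻¹) r :=
  ((hh'.fun_mul hu).fun_sub
    (((hasDerivAt_id' r).fun_mul hh).fun_inv (mul_ne_zero hr hhr))).congr_deriv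
      (by field_simp; ring)

theorem reductionOfOrder_solution_and_wronskian
    (hh : ∀ r ∈ Ioi 0, HasDerivAt h (h' r) r) (hh' : ∀ r ∈ Ioi 0, HasDerivAt h' (h'' r) r)
    (hsol : ∀ r ∈ Ioi 0, -h'' r - (1 / r) * h' r + V r * h r = 0)
    (hne : ∀ r ∈ Ioi 0, h r ≠ 0) (hu : ∀ r ∈ Ioi 0, HasDerivAt u (-1 / (r * h r ^ 2)) r) :
    (∀ r ∈ Ioi 0, -deriv (deriv fun x => h x * u x) r - (1 / r) * deriv (fun x => h x * u x) r
        + V r * (h r * u r) = 0) ∧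
      ∀ r ∈ Ioi 0, r * (deriv h r * (h r * u r) - h r * deriv (fun x => h x * u x) r) = 1 := by
  have hθ' : ∀ r ∈ Ioi (0 : ℝ), deriv (fun x => h x * u x) r = h' r * u r - (r * h r)⁻¹ :=
    fun r hr => (hasDerivAt_reductionOfOrder (hne r hr) (hh r hr) (hu r hr)).deriv
  refine ⟨fun r hr => ?_, fun r hr => ?_⟩
  · have hr0 : r ≠ 0 := ne_of_gt hr
    have hθ'' : deriv (deriv fun x => h x * u x) r = h'' r * u r + (r ^ 2 * h r)⁻¹ := by
      rw [(eventuallyEq_of_mem (isOpen_Ioi.mem_nhds hr) hθ').deriv_eq]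
      exact (hasDerivAt_reductionOfOrder_deriv hr0 (hne r hr) (hh r hr) (hh' r hr) (hu r hr)).deriv
    have hhr := hne r hr
    rw [hθ'', hθ' r hr, show h'' r = V r * h r - (1 / r) * h' r by linarith [hsol r hr]]
    field_simp
    ring
  · have hr0 : r ≠ 0 := ne_of_gt hr
    have hhr := hne r hr
    rw [hθ' r hr, (hh r hr).deriv]
    field_simp
    ring

end ReductionOfOrder

theorem hasDerivAt_h1 (r : ℝ) :
    HasDerivAt (fun x : ℝ => 2 * x ^ 2 / (x ^ 4 + 1))
      (4 * r * (1 - r ^ 4) / (r ^ 4 + 1) ^ 2) r :=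
  (((hasDerivAt_pow 2 r).const_mul 2).fun_div ((hasDerivAt_pow 4 r).add_const 1)
    (by positivity)).congr_deriv (by push_cast; ring)

theorem hasDerivAt_h1_deriv (r : ℝ) :
    HasDerivAt (fun x : ℝ => 4 * x * (1 - x ^ 4) / (x ^ 4 + 1) ^ 2)
      (4 * (3 * r ^ 8 - 12 * r ^ 4 + 1) / (r ^ 4 + 1) ^ 3) r :=
  ((((hasDerivAt_id' r).const_mul 4).fun_mul ((hasDerivAt_pow 4 r).const_sub 1)).fun_div
    (((hasDerivAt_pow 4 r).add_const 1).fun_pow 2) (by positivity)).congr_deriv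
    (by field_simp; ring)

theorem h1_solves_zeroEnergy {r : ℝ} (hr : r ≠ 0) :
    -(4 * (3 * r ^ 8 - 12 * r ^ 4 + 1) / (r ^ 4 + 1) ^ 3)
        - 1 / r * (4 * r * (1 - r ^ 4) / (r ^ 4 + 1) ^ 2)
        + 4 / r ^ 2 * (1 - 2 * (2 * r ^ 2 / (r ^ 4 + 1)) ^ 2) * (2 * r ^ 2 / (r ^ 4 + 1)) = 0 := by
  field_simp
  ring

/-- The summand `1/16` contributes the multiple `h₁/16` of the zero mode contained in `θ₀`. -/
noncomputable def theta0DivH1 (r : ℝ) : ℝ := ((r ^ 4)⁻¹ - r ^ 4) / 16 - Real.log r / 2 + 1 / 16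

theorem hasDerivAt_theta0DivH1 {r : ℝ} (hr : 0 < r) :
    HasDerivAt theta0DivH1 (-1 / (r * (2 * r ^ 2 / (r ^ 4 + 1)) ^ 2)) r := by
  refine (((((hasDerivAt_pow 4 r).fun_inv (by positivity)).fun_sub (hasDerivAt_pow 4 r)).div_const
    16).fun_sub ((Real.hasDerivAt_log hr.ne').div_const 2) |>.add_const (1 / 16)).congr_deriv ?_
  field_simp
  ring

theorem theta0_eq_h1_mul_theta0DivH1 :
    (fun r : ℝ => (-r ^ 8 + r ^ 4 - 8 * r ^ 4 * Real.log r + 1) / (8 * (r ^ 6 + r ^ 2)))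
      = fun r => 2 * r ^ 2 / (r ^ 4 + 1) * theta0DivH1 r := by
  funext r
  rcases eq_or_ne r 0 with rfl | hr
  · simp
  · unfold theta0DivH1
    field_simp
    ring

/-- The function `θ₀` is a second zero mode of `H` (singular at the origin), with
Wronskian normalization `r(h₁'θ₀ − h₁θ₀') = 1`. -/
theorem theta0_properties :
    let h1 : ℝ → ℝ := fun r => 2*r^2/(r^4+1)
    let θ : ℝ → ℝ := fun r => (-r^8 + r^4 - 8*r^4*Real.log r + 1)/(8*(r^6+r^2))
    (∀ r ∈ Ioi (0:ℝ),
        - deriv (deriv θ) r - (1/r) * deriv θ r + (4/r^2)*(1 - 2*(h1 r)^2) * θ r = 0)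
      ∧ ∀ r ∈ Ioi (0:ℝ), r * (deriv h1 r * θ r - h1 r * deriv θ r) = 1 := by
  intro h1 θ
  have hθ : θ = fun r => h1 r * theta0DivH1 r := theta0_eq_h1_mul_theta0DivH1
  rw [hθ]
  exact reductionOfOrder_solution_and_wronskian (V := fun r => 4 / r ^ 2 * (1 - 2 * h1 r ^ 2))
    (fun r _ => hasDerivAt_h1 r) (fun r _ => hasDerivAt_h1_deriv r)
    (fun r hr => h1_solves_zeroEnergy (ne_of_gt hr)) (fun r (hr : 0 < r) => by positivity)
    (fun r hr => hasDerivAt_theta0DivH1 hr)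
end

section
/- For u > 0 define φ₁(u) = −( 2u² ∫₀^u (2 arctan x)/x dx + (u⁴ − 1) arctan u − 3u³ + u ) / ( 8(u⁴ + u²) ), and for r > 0 let h₁(r) = 2r²/(r⁴+1) and (Hf)(r) = −f″(r) − (1/r) f′(r) + (4/r²)(1 − 2 h₁(r)²) f(r). Then the function g(r) := r² φ₁(r²) satisfies H g = h₁ on (0,∞). -/
/-!
Substitute `u = r²`: for `g r = ψ (r²)` the radial part `g'' + g'/r` becomes `4 (u ψ'' + ψ')`,
so with `ψ u = u φ₁ u` the claim is an identity between `ψ`, `ψ'`, `ψ''` at `u = r²`.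
The only non-elementary ingredient of `ψ` is `F u = ∫₀ᵘ 2 arctan x / x dx`, and `F' u = 2 arctan u / u`
is again elementary, so `ψ'` and `ψ''` are explicit and the claim becomes a rational identity in
`u`, `F u` and `arctan u`.
-/

open MeasureTheory Set Real Filter Topology

theorem Real.arctan_le_self {x : ℝ} (hx : 0 ≤ x) : arctan x ≤ x :=
  (le_tan (arctan_nonneg.2 hx) (arctan_lt_pi_div_two x)).trans_eq (tan_arctan x)

theorem Real.abs_arctan_le_abs (x : ℝ) : |arctan x| ≤ |x| := by
  rcases le_total 0 x with hx | hx
  · rw [abs_of_nonneg (arctan_nonneg.2 hx), abs_of_nonneg hx]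
    exact arctan_le_self hx
  · rw [abs_of_nonpos (arctan_le_zero.2 hx), abs_of_nonpos hx, ← arctan_neg]
    exact arctan_le_self (neg_nonneg.2 hx)

theorem intervalIntegrable_two_mul_arctan_div (a b : ℝ) :
    IntervalIntegrable (fun x => 2 * arctan x / x) volume a b := by
  refine (intervalIntegrable_const (c := (2 : ℝ))).mono_fun
    (Measurable.aestronglyMeasurable (by fun_prop)) ?_
  filter_upwards with x
  rcases eq_or_ne x 0 with rfl | hx
  · simp
  · rw [norm_div, norm_mul, div_le_iff₀ (norm_pos_iff.2 hx)]
    simpa using abs_arctan_le_abs x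

theorem HasDerivAt.comp_sq {ψ : ℝ → ℝ} {d r : ℝ} (h : HasDerivAt ψ d (r ^ 2)) :
    HasDerivAt (fun s => ψ (s ^ 2)) (2 * r * d) r := by
  refine (HasDerivAt.comp (h := fun s => s ^ 2) r h (hasDerivAt_pow 2 r)).congr_deriv ?_
  push_cast
  ring

theorem deriv_deriv_comp_sq {ψ ψ' : ℝ → ℝ} {d r : ℝ}
    (hψ : ∀ᶠ u in 𝓝 (r ^ 2), HasDerivAt ψ (ψ' u) u) (hψ' : HasDerivAt ψ' d (r ^ 2)) :
    deriv (deriv fun s => ψ (s ^ 2)) r = 2 * ψ' (r ^ 2) + 4 * r ^ 2 * d := by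
  have hderiv : deriv (fun s => ψ (s ^ 2)) =ᶠ[𝓝 r] fun s => 2 * s * ψ' (s ^ 2) :=
    ((continuous_pow 2).tendsto r).eventually hψ |>.mono fun s hs => hs.comp_sq.deriv
  rw [hderiv.deriv_eq, (((hasDerivAt_id' r).const_mul 2).fun_mul hψ'.comp_sq).deriv]
  ring

namespace Phi1

noncomputable def F (u : ℝ) : ℝ := ∫ x in (0 : ℝ)..u, 2 * arctan x / x

theorem hasDerivAt_F {u : ℝ} (hu : u ≠ 0) : HasDerivAt F (2 * arctan u / u) u :=
  intervalIntegral.integral_hasDerivAt_right (intervalIntegrable_two_mul_arctan_div 0 u)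
    (Measurable.stronglyMeasurable (by fun_prop)).stronglyMeasurableAtFilter
    (by fun_prop (disch := exact hu))

noncomputable def φ (u : ℝ) : ℝ :=
  -(2 * u ^ 2 * F u + (u ^ 4 - 1) * arctan u - 3 * u ^ 3 + u) / (8 * (u ^ 4 + u ^ 2))

noncomputable def ψ (u : ℝ) : ℝ := u * φ u

noncomputable def ψ' (u : ℝ) : ℝ :=
  -(2 * (1 - u ^ 2) * F u / (u ^ 2 + 1) ^ 2 + 4 * arctan u / (u ^ 2 + 1)
    + (u ^ 2 + 1) * arctan u / u ^ 2 + (u ^ 2 - 1) / (u * (u ^ 2 + 1)) - 8 * u / (u ^ 2 + 1) ^ 2) / 8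

noncomputable def ψ'' (u : ℝ) : ℝ :=
  -((4 * u ^ 3 - 12 * u) * F u / (u ^ 2 + 1) ^ 3 + 4 * (1 - u ^ 2) * arctan u / (u * (u ^ 2 + 1) ^ 2)
    + 4 / (u ^ 2 + 1) ^ 2 - 8 * u * arctan u / (u ^ 2 + 1) ^ 2 - 2 * arctan u / u ^ 3 + 1 / u ^ 2
    + (-u ^ 4 + 4 * u ^ 2 + 1) / (u ^ 2 * (u ^ 2 + 1) ^ 2) - 8 / (u ^ 2 + 1) ^ 2
    + 32 * u ^ 2 / (u ^ 2 + 1) ^ 3) / 8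

theorem hasDerivAt_ψ {u : ℝ} (hu : u ≠ 0) : HasDerivAt ψ (ψ' u) u := by
  have num := ((((((hasDerivAt_pow 2 u).const_mul 2).fun_mul (hasDerivAt_F hu)).fun_add
    (((hasDerivAt_pow 4 u).sub_const 1).fun_mul (hasDerivAt_arctan u))).fun_sub
    ((hasDerivAt_pow 3 u).const_mul 3)).fun_add (hasDerivAt_id' u)).fun_neg
  have den := ((hasDerivAt_pow 4 u).fun_add (hasDerivAt_pow 2 u)).const_mul 8
  refine ((hasDerivAt_id' u).fun_mul (num.fun_div den (by positivity))).congr_deriv ?_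
  simp only [ψ']
  field_simp
  ring

theorem hasDerivAt_ψ' {u : ℝ} (hu : u ≠ 0) : HasDerivAt ψ' (ψ'' u) u := by
  have hsq := hasDerivAt_pow 2 u
  have hq := hsq.add_const 1
  have hA := hasDerivAt_arctan u
  have t₁ := ((hsq.const_sub 1).const_mul 2).fun_mul (hasDerivAt_F hu) |>.fun_div (hq.fun_pow 2)
    (by positivity)
  have t₂ := (hA.const_mul 4).fun_div hq (by positivity)
  have t₃ := (hq.fun_mul hA).fun_div hsq (by positivity)
  have t₄ := (hsq.sub_const 1).fun_div ((hasDerivAt_id' u).fun_mul hq) (by positivity)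
  have t₅ := ((hasDerivAt_id' u).const_mul 8).fun_div (hq.fun_pow 2) (by positivity)
  refine (((((t₁.fun_add t₂).fun_add t₃).fun_add t₄).fun_sub t₅).fun_neg.div_const 8).congr_deriv ?_
  simp only [ψ'']
  field_simp
  ring

end Phi1

/-- The function `g(r) = r² φ₁(r²)` built from the explicit coefficient `φ₁` solves
`H g = h₁`, the first step of the recursion for the generalized eigenfunctions of `H`. -/
theorem phi1_equation :
    let h1 : ℝ → ℝ := fun r => 2*r^2/(r^4+1)
    let φ : ℝ → ℝ := fun u =>
      -(2*u^2 * (∫ x in (0:ℝ)..u, 2*Real.arctan x / x)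
          + (u^4 - 1)*Real.arctan u - 3*u^3 + u) / (8*(u^4+u^2))
    let g : ℝ → ℝ := fun r => r^2 * φ (r^2)
    ∀ r ∈ Ioi (0:ℝ),
      - deriv (deriv g) r - (1/r) * deriv g r + (4/r^2)*(1 - 2*(h1 r)^2) * g r = h1 r := by
  intro h1 φ g r hr
  have hr : r ≠ 0 := (mem_Ioi.1 hr).ne'
  have hu : r ^ 2 ≠ 0 := by positivity
  have hψ : ∀ᶠ u in 𝓝 (r ^ 2), HasDerivAt Phi1.ψ (Phi1.ψ' u) u :=
    eventually_ne_nhds hu |>.mono fun u hu => Phi1.hasDerivAt_ψ hu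
  rw [show g = fun s => Phi1.ψ (s ^ 2) from rfl, deriv_deriv_comp_sq hψ (Phi1.hasDerivAt_ψ' hu),
    (Phi1.hasDerivAt_ψ hu).comp_sq.deriv]
  simp only [h1, Phi1.ψ, Phi1.φ, Phi1.ψ', Phi1.ψ'']
  field_simp
  ring
end

section
/- For r > 0 let h₁(r) = 2r²/(r⁴+1), h₃(r) = (r⁴−1)/(r⁴+1), and define ψ₀(r) = ( r² − (1 + r⁴) arctan(r²) ) / (2 r³). Then for every r > 0: −ψ₀′(r) + ( (2 h₃(r) − 1)/r ) ψ₀(r) = h₁(r). That is, ψ₀ solves L* ψ₀ = φ₀ where L* = −∂_r + (2h₃ − 1)/r and φ₀ = h₁. -/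
/-! The numerator `r² − (1 + r⁴) arctan r²` has derivative `−4r³ arctan r²`: `(1 + r⁴)` times
the derivative `2r/(1 + r⁴)` of `arctan r²` cancels the derivative of `r²`. Hence `ψ₀' = −2 arctan r² − 3ψ₀/r`,
and since `2h₃ + 2 = 4r⁴/(r⁴ + 1)`, the arctan terms cancel in `−ψ₀' + ((2h₃ − 1)/r) ψ₀`. -/

open Real

noncomputable def psi0 (r : ℝ) : ℝ := (r^2 - (1+r^4)*arctan (r^2)) / (2*r^3)

theorem hasDerivAt_arctan_sq (r : ℝ) :
    HasDerivAt (fun s : ℝ => arctan (s^2)) (2*r / (1 + r^4)) r := by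
  refine ((hasDerivAt_arctan (r^2)).comp r (hasDerivAt_pow 2 r)).congr_deriv ?_
  field_simp
  ring

theorem hasDerivAt_psi0_numerator (r : ℝ) :
    HasDerivAt (fun s : ℝ => s^2 - (1+s^4)*arctan (s^2)) (-4*r^3 * arctan (r^2)) r := by
  have hquartic : HasDerivAt (fun s : ℝ => 1 + s^4) (4*r^3) r := by
    simpa using (hasDerivAt_pow 4 r).const_add 1
  refine ((hasDerivAt_pow 2 r).sub (hquartic.mul (hasDerivAt_arctan_sq r))).congr_deriv ?_
  field_simp
  ring

theorem hasDerivAt_psi0 {r : ℝ} (hr : r ≠ 0) :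
    HasDerivAt psi0 (-2 * arctan (r^2) - 3 * psi0 r / r) r := by
  have hcube : HasDerivAt (fun s : ℝ => 2*s^3) (2*(3*r^2)) r :=
    (hasDerivAt_pow 3 r).const_mul 2
  refine ((hasDerivAt_psi0_numerator r).div hcube (by positivity)).congr_deriv ?_
  unfold psi0
  field_simp
  ring

/-- The zero-frequency profile `ψ₀` solves `L* ψ₀ = h₁`, where
`L* = −∂_r + (2h₃−1)/r`. -/
theorem psi0_equation (r : ℝ) (hr : 0 < r) :
    - deriv (fun s : ℝ => (s^2 - (1+s^4)*Real.arctan (s^2)) / (2*s^3)) r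
      + ((2*((r^4-1)/(r^4+1)) - 1)/r) * ((r^2 - (1+r^4)*Real.arctan (r^2)) / (2*r^3))
      = 2*r^2/(r^4+1) := by
  change -deriv psi0 r + ((2*((r^4-1)/(r^4+1)) - 1)/r) * psi0 r = 2*r^2/(r^4+1)
  rw [(hasDerivAt_psi0 hr.ne').deriv]
  unfold psi0
  field_simp
  ring
end

section
/- Let 1 ≤ p < ∞ and ε ∈ (0,1). Let w : (0,∞) → (0,∞) be such that g(r) := w(r) r^{2/p} is nondecreasing and satisfies g(r) ≤ (1−ε) g(2r) for all r > 0. Then there exists a constant C (depending only on p and ε) such that for every measurable f : (0,∞) → ℂ with ∫₀^∞ |w(r) f(r)|^p r dr < ∞: ∫₀^∞ | w(r) ∫_r^∞ f(s)/s ds |^p r dr ≤ C ∫₀^∞ |w(r) f(r)|^p r dr. -/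
open MeasureTheory Set
open scoped ENNReal

/-! Put `g r = w r * r ^ (2 / p)`. Iterating `g r ≤ (1 - ε) g (2 r)` along `r, 2r, 4r, …` and using
monotonicity in between gives the power decay `g r ≤ (1 - ε)⁻¹ (r / s) ^ a g s` for `r ≤ s`,
with `a = log₂ (1 - ε)⁻¹ > 0`; let `γ = a p / 2`. Hölder's inequality on `(r, ∞)` against the weight
`s ^ (γ - 1)` bounds `|∫_r^∞ f(s)/s ds|^p` by a multiple of `r^(-γ) ∫_r^∞ |f(s)|^p s^(γ-1) ds`.
After exchanging the order of integration one is left with `∫_0^s w(r)^p r^(1-γ) dr`, which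
converges at `0` because of the power decay and is at most a multiple of `w(s)^p s^(2-γ)`; the
powers of `s` then recombine into `∫ |w(s) f(s)|^p s ds`. -/

section Doubling

variable {g : ℝ → ℝ} {c : ℝ}

lemma le_pow_mul_apply_two_pow_mul (hc : 0 ≤ c) (hdoub : ∀ r, 0 < r → g r ≤ c * g (2 * r))
    {r : ℝ} (hr : 0 < r) (k : ℕ) : g r ≤ c ^ k * g (2 ^ k * r) := by
  induction k with
  | zero => simp
  | succ k ih =>
    calc g r ≤ c ^ k * g (2 ^ k * r) := ih
      _ ≤ c ^ k * (c * g (2 * (2 ^ k * r))) := by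
        gcongr
        exact hdoub _ (by positivity)
      _ = c ^ (k + 1) * g (2 ^ (k + 1) * r) := by ring_nf

lemma le_mul_rpow_logb_mul_of_doubling (hc0 : 0 < c) (hc1 : c ≤ 1) (hg : ∀ r, 0 < r → 0 ≤ g r)
    (hmono : ∀ r s, 0 < r → r ≤ s → g r ≤ g s) (hdoub : ∀ r, 0 < r → g r ≤ c * g (2 * r))
    {r s : ℝ} (hr : 0 < r) (hrs : r ≤ s) :
    g r ≤ c⁻¹ * (s / r) ^ Real.logb 2 c * g s := by
  obtain ⟨k, hk, hk1⟩ := exists_nat_pow_near ((one_le_div hr).2 hrs) one_lt_two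
  have hpow : c ^ (k + 1) ≤ (s / r) ^ Real.logb 2 c :=
    calc c ^ (k + 1) = ((2 : ℝ) ^ Real.logb 2 c) ^ (k + 1) := by
          rw [Real.rpow_logb two_pos (by norm_num) hc0]
      _ = ((2 : ℝ) ^ (k + 1)) ^ Real.logb 2 c := by
          rw [← Real.rpow_mul_natCast zero_le_two, ← Real.rpow_natCast_mul zero_le_two, mul_comm]
      _ ≤ (s / r) ^ Real.logb 2 c :=
          Real.rpow_le_rpow_of_nonpos (div_pos (hr.trans_le hrs) hr) hk1.le
            (Real.logb_nonpos one_lt_two hc0.le hc1)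
  calc g r ≤ c ^ k * g (2 ^ k * r) := le_pow_mul_apply_two_pow_mul hc0.le hdoub hr k
    _ ≤ c ^ k * g s := by
        gcongr
        exact hmono _ _ (by positivity) ((le_div_iff₀ hr).1 hk)
    _ = c⁻¹ * c ^ (k + 1) * g s := by field_simp; ring
    _ ≤ c⁻¹ * (s / r) ^ Real.logb 2 c * g s := by
        gcongr
        exact hg s (hr.trans_le hrs)

end Doubling

lemma mul_rpow_two_div_rpow {a x p : ℝ} (ha : 0 ≤ a) (hx : 0 ≤ x) (hp : p ≠ 0) :
    (a * x ^ (2 / p)) ^ p = a ^ p * x ^ 2 := by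
  rw [Real.mul_rpow ha (Real.rpow_nonneg hx _), ← Real.rpow_mul hx, div_mul_cancel₀ _ hp]
  norm_cast

lemma rpow_mul_sq_le_of_mul_rpow_two_div_le {p b K a₁ a₂ r s : ℝ} (hp : 0 < p) (hr : 0 < r)
    (hs : 0 < s) (hK : 0 ≤ K) (ha₁ : 0 ≤ a₁) (ha₂ : 0 ≤ a₂)
    (h : a₁ * r ^ (2 / p) ≤ K * (s / r) ^ b * (a₂ * s ^ (2 / p))) :
    a₁ ^ p * r ^ 2 ≤ K ^ p * (r / s) ^ (-(b * p)) * (a₂ ^ p * s ^ 2) := by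
  have key := Real.rpow_le_rpow (by positivity) h hp.le
  rw [mul_rpow_two_div_rpow ha₁ hr.le hp.ne', Real.mul_rpow (by positivity) (by positivity),
    Real.mul_rpow hK (by positivity), mul_rpow_two_div_rpow ha₂ hs.le hp.ne',
    ← Real.rpow_mul (by positivity)] at key
  rwa [Real.rpow_neg (by positivity), ← Real.inv_rpow (by positivity), inv_div]

lemma exists_rpow_mul_sq_le_of_doubling {p ε : ℝ} {w : ℝ → ℝ} (hp : 0 < p) (hε0 : 0 < ε)
    (hε1 : ε < 1) (hw : ∀ r, 0 < r → 0 ≤ w r)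
    (hmono : ∀ r s, 0 < r → r ≤ s → w r * r ^ (2 / p) ≤ w s * s ^ (2 / p))
    (hdoub : ∀ r, 0 < r → w r * r ^ (2 / p) ≤ (1 - ε) * (w (2 * r) * (2 * r) ^ (2 / p))) :
    ∃ γ : ℝ, 0 < γ ∧ ∀ r s, 0 < r → r ≤ s →
      w r ^ p * r ^ 2 ≤ (1 - ε)⁻¹ ^ p * (r / s) ^ (2 * γ) * (w s ^ p * s ^ 2) := by
  have hc0 : 0 < 1 - ε := sub_pos.2 hε1
  refine ⟨-(Real.logb 2 (1 - ε) * p) / 2, div_pos (neg_pos.2 (mul_neg_of_neg_of_pos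
    (Real.logb_neg one_lt_two hc0 (sub_lt_self 1 hε0)) hp)) two_pos, fun r s hr hrs => ?_⟩
  have hs := hr.trans_le hrs
  rw [mul_div_cancel₀ _ two_ne_zero]
  exact rpow_mul_sq_le_of_mul_rpow_two_div_le hp hr hs (inv_nonneg.2 hc0.le) (hw r hr) (hw s hs)
    (le_mul_rpow_logb_mul_of_doubling hc0 (sub_le_self 1 hε0.le)
      (fun r hr => mul_nonneg (hw r hr) (Real.rpow_nonneg hr.le _)) hmono hdoub hr hrs)

lemma aemeasurable_of_monotoneOn_mul_rpow {w : ℝ → ℝ} {a : ℝ}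
    (hmono : MonotoneOn (fun r => w r * r ^ a) (Ioi 0)) :
    AEMeasurable w (volume.restrict (Ioi 0)) := by
  refine ((aemeasurable_restrict_of_monotoneOn measurableSet_Ioi hmono).mul
    (by fun_prop : AEMeasurable (fun r : ℝ => r ^ (-a)) _)).congr ?_
  filter_upwards [ae_restrict_mem measurableSet_Ioi] with r hr
  rw [Pi.mul_apply, mul_assoc, ← Real.rpow_add hr, add_neg_cancel, Real.rpow_zero, mul_one]

lemma lintegral_Ioo_zero_rpow {s e : ℝ} (hs : 0 < s) (he : -1 < e) :
    ∫⁻ r in Ioo 0 s, ENNReal.ofReal (r ^ e) = ENNReal.ofReal (s ^ (e + 1) / (e + 1)) := by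
  rw [← ofReal_integral_eq_lintegral_ofReal ((intervalIntegral.integrableOn_Ioo_rpow_iff hs).2 he)
    ((ae_restrict_iff' measurableSet_Ioo).2 (.of_forall fun r hr => Real.rpow_nonneg hr.1.le e)),
    ← integral_Ioc_eq_integral_Ioo, ← intervalIntegral.integral_of_le hs.le,
    integral_rpow (Or.inl he), Real.zero_rpow (by linarith), sub_zero]

lemma lintegral_Ioi_rpow {r e : ℝ} (hr : 0 < r) (he : e < -1) :
    ∫⁻ s in Ioi r, ENNReal.ofReal (s ^ e) = ENNReal.ofReal (-r ^ (e + 1) / (e + 1)) := by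
  rw [← ofReal_integral_eq_lintegral_ofReal (integrableOn_Ioi_rpow_of_lt he hr)
    ((ae_restrict_iff' measurableSet_Ioi).2
      (.of_forall fun s hs => Real.rpow_nonneg (hr.trans hs).le e)),
    integral_Ioi_rpow_of_lt he hr]

lemma lintegral_Ioo_mul_rpow_le_of_le_mul_rpow {u : ℝ → ℝ} {K α β s : ℝ} (hK : 0 ≤ K)
    (hβα : β < α) (hs : 0 < s) (hus : 0 ≤ u s) (hu : ∀ r ∈ Ioo 0 s, u r ≤ K * (r / s) ^ α * u s) :
    ∫⁻ r in Ioo 0 s, ENNReal.ofReal (u r * r ^ (-1 - β))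
      ≤ ENNReal.ofReal (K / (α - β) * u s * s ^ (-β)) := by
  have hD : 0 ≤ K * u s * s ^ (-α) := by positivity
  calc ∫⁻ r in Ioo 0 s, ENNReal.ofReal (u r * r ^ (-1 - β))
      ≤ ∫⁻ r in Ioo 0 s,
          ENNReal.ofReal (K * u s * s ^ (-α)) * ENNReal.ofReal (r ^ (α - 1 - β)) := by
        refine setLIntegral_mono' measurableSet_Ioo fun r hr => ?_
        rw [← ENNReal.ofReal_mul hD]
        refine ENNReal.ofReal_le_ofReal ?_
        calc u r * r ^ (-1 - β) ≤ K * (r / s) ^ α * u s * r ^ (-1 - β) :=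
              mul_le_mul_of_nonneg_right (hu r hr) (Real.rpow_nonneg hr.1.le _)
          _ = K * u s * s ^ (-α) * r ^ (α - 1 - β) := by
              rw [Real.div_rpow hr.1.le hs.le, Real.rpow_neg hs.le,
                show α - 1 - β = α + (-1 - β) by ring, Real.rpow_add hr.1]
              ring
    _ = ENNReal.ofReal (K * u s * s ^ (-α)) * ENNReal.ofReal (s ^ (α - β) / (α - β)) := by
        rw [lintegral_const_mul' _ _ ENNReal.ofReal_ne_top,
          lintegral_Ioo_zero_rpow hs (by linarith), show α - 1 - β + 1 = α - β by ring]
    _ = ENNReal.ofReal (K / (α - β) * u s * s ^ (-β)) := by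
        rw [← ENNReal.ofReal_mul hD, Real.rpow_sub hs, Real.rpow_neg hs.le, Real.rpow_neg hs.le]
        congr 1
        field_simp

lemma lintegral_Ioo_weight_mul_enorm_rpow_le {E : Type*} [NormedAddCommGroup E] {p γ K s : ℝ}
    (hp : 0 ≤ p) (hγ : 0 < γ) (hK : 0 ≤ K) {w : ℝ → ℝ} (hw : ∀ r, 0 < r → 0 ≤ w r)
    (hdecay : ∀ r s, 0 < r → r ≤ s → w r ^ p * r ^ 2 ≤ K * (r / s) ^ (2 * γ) * (w s ^ p * s ^ 2))
    (hs : 0 < s) (z : E) :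
    (∫⁻ r in Ioo 0 s, ENNReal.ofReal (w r ^ p * r ^ 2 * r ^ (-1 - γ))) *
        (‖z‖ₑ ^ p * ENNReal.ofReal (s ^ (γ - 1)))
      ≤ ENNReal.ofReal (K / γ) * ENNReal.ofReal ((w s * ‖z‖) ^ p * s) := by
  have hws := hw s hs
  have hspow : s ^ 2 * s ^ (-γ) * s ^ (γ - 1) = s := by
    rw [mul_assoc, ← Real.rpow_add hs, ← Real.rpow_natCast, ← Real.rpow_add hs,
      show ((2 : ℕ) : ℝ) + (-γ + (γ - 1)) = 1 by push_cast; ring, Real.rpow_one]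
  have hreal : K / γ * (w s ^ p * s ^ 2) * s ^ (-γ) * (‖z‖ ^ p * s ^ (γ - 1))
      = K / γ * ((w s * ‖z‖) ^ p * s) := by
    rw [Real.mul_rpow hws (norm_nonneg _)]
    linear_combination (K / γ * w s ^ p * ‖z‖ ^ p) * hspow
  calc (∫⁻ r in Ioo 0 s, ENNReal.ofReal (w r ^ p * r ^ 2 * r ^ (-1 - γ))) *
        (‖z‖ₑ ^ p * ENNReal.ofReal (s ^ (γ - 1)))
      ≤ ENNReal.ofReal (K / (2 * γ - γ) * (w s ^ p * s ^ 2) * s ^ (-γ)) *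
          (‖z‖ₑ ^ p * ENNReal.ofReal (s ^ (γ - 1))) := by
        gcongr
        exact lintegral_Ioo_mul_rpow_le_of_le_mul_rpow (u := fun r => w r ^ p * r ^ 2) hK
          (by linarith) hs (by positivity) fun r hr => hdecay r s hr.1 hr.2.le
    _ = ENNReal.ofReal (K / γ) * ENNReal.ofReal ((w s * ‖z‖) ^ p * s) := by
        rw [show 2 * γ - γ = γ by ring, ← ofReal_norm,
          ENNReal.ofReal_rpow_of_nonneg (norm_nonneg _) hp,
          ← ENNReal.ofReal_mul (by positivity : 0 ≤ ‖z‖ ^ p),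
          ← ENNReal.ofReal_mul (by positivity), hreal, ENNReal.ofReal_mul (by positivity)]

lemma lintegral_Ioi_mul_inv_le {γ r : ℝ} (hγ : 0 < γ) (hr : 0 < r) (φ : ℝ → ℝ≥0∞) :
    ∫⁻ s in Ioi r, φ s * ENNReal.ofReal s⁻¹
      ≤ ENNReal.ofReal (r ^ (-γ)) * ∫⁻ s in Ioi r, φ s * ENNReal.ofReal (s ^ (γ - 1)) := by
  rw [← lintegral_const_mul' _ _ ENNReal.ofReal_ne_top]
  refine setLIntegral_mono' measurableSet_Ioi fun s hs => ?_
  have hs0 : 0 < s := hr.trans hs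
  rw [mul_left_comm, ← ENNReal.ofReal_mul (Real.rpow_nonneg hr.le _)]
  gcongr
  calc s⁻¹ = s ^ (-γ) * s ^ (γ - 1) := by
        rw [← Real.rpow_add hs0, show -γ + (γ - 1) = -1 by ring, Real.rpow_neg_one]
    _ ≤ r ^ (-γ) * s ^ (γ - 1) :=
        mul_le_mul_of_nonneg_right (Real.rpow_le_rpow_of_nonpos hr (le_of_lt hs) (by linarith))
          (Real.rpow_nonneg hs0.le _)

lemma lintegral_Ioi_rpow_neg_one_sub_div_rpow {q γ r : ℝ} (hq : 0 < q) (hγ : 0 < γ)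
    (hr : 0 < r) :
    (∫⁻ s in Ioi r, ENNReal.ofReal (s ^ (-1 - γ / q))) ^ q
      = ENNReal.ofReal (q / γ) ^ q * ENNReal.ofReal (r ^ (-γ)) := by
  rw [lintegral_Ioi_rpow hr (by linarith [div_pos hγ hq]), show -1 - γ / q + 1 = -(γ / q) by ring,
    show -r ^ (-(γ / q)) / -(γ / q) = q / γ * r ^ (-(γ / q)) by field_simp,
    ENNReal.ofReal_mul (by positivity), ENNReal.mul_rpow_of_nonneg _ _ hq.le,
    ENNReal.ofReal_rpow_of_nonneg (Real.rpow_nonneg hr.le _) hq.le, ← Real.rpow_mul hr.le,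
    neg_mul, div_mul_cancel₀ _ hq.ne']

lemma lintegral_Ioi_mul_inv_rpow_le_of_one_lt {p γ r : ℝ} (hp : 1 < p) (hγ : 0 < γ) (hr : 0 < r)
    {φ : ℝ → ℝ≥0∞} (hφ : AEMeasurable φ (volume.restrict (Ioi r))) :
    (∫⁻ s in Ioi r, φ s * ENNReal.ofReal s⁻¹) ^ p
      ≤ ENNReal.ofReal ((p - 1) / γ) ^ (p - 1) * ENNReal.ofReal (r ^ (-γ)) *
          ∫⁻ s in Ioi r, φ s ^ p * ENNReal.ofReal (s ^ (γ - 1)) := by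
  have hp0 : 0 < p := one_pos.trans hp
  have hp1 : 0 < p - 1 := sub_pos.2 hp
  set e := -1 - γ / (p - 1)
  have hholder := ENNReal.lintegral_mul_norm_pow_le (μ := volume.restrict (Ioi r))
    (f := fun s => φ s ^ p * ENNReal.ofReal (s ^ (γ - 1))) (g := fun s => ENNReal.ofReal (s ^ e))
    (by fun_prop) (by fun_prop) (p := 1 / p) (q := (p - 1) / p) (by positivity) (by positivity)
    (by field_simp; ring)
  have hsplit : ∫⁻ s in Ioi r, φ s * ENNReal.ofReal s⁻¹ = ∫⁻ s in Ioi r,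
      (φ s ^ p * ENNReal.ofReal (s ^ (γ - 1))) ^ (1 / p) *
        ENNReal.ofReal (s ^ e) ^ ((p - 1) / p) := by
    refine setLIntegral_congr_fun measurableSet_Ioi fun s hs => ?_
    have hs0 : 0 < s := hr.trans hs
    rw [ENNReal.mul_rpow_of_nonneg _ _ (by positivity), ← ENNReal.rpow_mul,
      mul_one_div_cancel hp0.ne', ENNReal.rpow_one,
      ENNReal.ofReal_rpow_of_nonneg (by positivity) (by positivity),
      ENNReal.ofReal_rpow_of_nonneg (by positivity) (by positivity), mul_assoc,
      ← ENNReal.ofReal_mul (by positivity), ← Real.rpow_mul hs0.le, ← Real.rpow_mul hs0.le,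
      ← Real.rpow_add hs0, ← Real.rpow_neg_one]
    congr 3
    simp only [e]
    field_simp
    ring
  calc (∫⁻ s in Ioi r, φ s * ENNReal.ofReal s⁻¹) ^ p
      ≤ ((∫⁻ s in Ioi r, φ s ^ p * ENNReal.ofReal (s ^ (γ - 1))) ^ (1 / p) *
          (∫⁻ s in Ioi r, ENNReal.ofReal (s ^ e)) ^ ((p - 1) / p)) ^ p := by
        rw [hsplit]
        exact ENNReal.rpow_le_rpow hholder hp0.le
    _ = ENNReal.ofReal ((p - 1) / γ) ^ (p - 1) * ENNReal.ofReal (r ^ (-γ)) *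
          ∫⁻ s in Ioi r, φ s ^ p * ENNReal.ofReal (s ^ (γ - 1)) := by
        rw [ENNReal.mul_rpow_of_nonneg _ _ hp0.le, ← ENNReal.rpow_mul, ← ENNReal.rpow_mul,
          one_div_mul_cancel hp0.ne', div_mul_cancel₀ _ hp0.ne', ENNReal.rpow_one,
          lintegral_Ioi_rpow_neg_one_sub_div_rpow hp1 hγ hr, mul_comm]

lemma lintegral_Ioi_mul_inv_rpow_le {p γ r : ℝ} (hp : 1 ≤ p) (hγ : 0 < γ) (hr : 0 < r)
    {φ : ℝ → ℝ≥0∞} (hφ : AEMeasurable φ (volume.restrict (Ioi r))) :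
    (∫⁻ s in Ioi r, φ s * ENNReal.ofReal s⁻¹) ^ p
      ≤ ENNReal.ofReal ((p - 1) / γ) ^ (p - 1) * ENNReal.ofReal (r ^ (-γ)) *
          ∫⁻ s in Ioi r, φ s ^ p * ENNReal.ofReal (s ^ (γ - 1)) := by
  rcases hp.eq_or_lt with rfl | hp
  · simpa using lintegral_Ioi_mul_inv_le hγ hr φ
  · exact lintegral_Ioi_mul_inv_rpow_le_of_one_lt hp hγ hr hφ

lemma enorm_setIntegral_Ioi_div_le (f : ℝ → ℂ) {r : ℝ} (hr : 0 ≤ r) :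
    ‖∫ s in Ioi r, f s / (s : ℂ)‖ₑ ≤ ∫⁻ s in Ioi r, ‖f s‖ₑ * ENNReal.ofReal s⁻¹ := by
  refine (enorm_integral_le_lintegral_enorm _).trans_eq (setLIntegral_congr_fun measurableSet_Ioi
    fun s hs => ?_)
  rw [← ofReal_norm, norm_div, Complex.norm_real, Real.norm_of_nonneg (hr.trans (le_of_lt hs)),
    div_eq_mul_inv, ENNReal.ofReal_mul (norm_nonneg _), ofReal_norm]

lemma ofReal_mul_norm_setIntegral_Ioi_div_rpow_le {p γ a r : ℝ} (hp : 1 ≤ p) (hγ : 0 < γ)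
    (ha : 0 ≤ a) (hr : 0 < r) {f : ℝ → ℂ} (hf : AEMeasurable f (volume.restrict (Ioi r))) :
    ENNReal.ofReal ((a * ‖∫ s in Ioi r, f s / (s : ℂ)‖) ^ p * r)
      ≤ ENNReal.ofReal ((p - 1) / γ) ^ (p - 1) * (ENNReal.ofReal (a ^ p * r ^ 2 * r ^ (-1 - γ)) *
          ∫⁻ s in Ioi r, ‖f s‖ₑ ^ p * ENNReal.ofReal (s ^ (γ - 1))) := by
  have hp0 : 0 ≤ p := zero_le_one.trans hp
  set I := ∫ s in Ioi r, f s / (s : ℂ)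
  set X := a ^ p * r ^ 2 * r ^ (-1 - γ)
  have hXr : X * r ^ γ = a ^ p * r := by
    rw [mul_assoc, mul_assoc, ← Real.rpow_add hr, ← Real.rpow_natCast, ← Real.rpow_add hr]
    norm_num
  have hrγ : ENNReal.ofReal (X * r ^ γ) * ENNReal.ofReal (r ^ (-γ)) = ENNReal.ofReal X := by
    rw [← ENNReal.ofReal_mul (by positivity), mul_assoc, ← Real.rpow_add hr, add_neg_cancel,
      Real.rpow_zero, mul_one]
  calc ENNReal.ofReal ((a * ‖I‖) ^ p * r) = ENNReal.ofReal (X * r ^ γ) * ‖I‖ₑ ^ p := by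
        rw [← ofReal_norm, ENNReal.ofReal_rpow_of_nonneg (norm_nonneg _) hp0,
          ← ENNReal.ofReal_mul (by positivity), Real.mul_rpow ha (norm_nonneg _), hXr]
        ring_nf
    _ ≤ ENNReal.ofReal (X * r ^ γ) * (ENNReal.ofReal ((p - 1) / γ) ^ (p - 1) *
          ENNReal.ofReal (r ^ (-γ)) *
            ∫⁻ s in Ioi r, ‖f s‖ₑ ^ p * ENNReal.ofReal (s ^ (γ - 1))) := by
        gcongr
        exact (ENNReal.rpow_le_rpow (enorm_setIntegral_Ioi_div_le f hr.le) hp0).trans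
          (lintegral_Ioi_mul_inv_rpow_le hp hγ hr hf.enorm)
    _ = ENNReal.ofReal ((p - 1) / γ) ^ (p - 1) * (ENNReal.ofReal X *
          ∫⁻ s in Ioi r, ‖f s‖ₑ ^ p * ENNReal.ofReal (s ^ (γ - 1))) := by
        rw [← hrγ]
        ring

lemma lintegral_Ioi_mul_lintegral_Ioi_eq {F H : ℝ → ℝ≥0∞}
    (hF : AEMeasurable F (volume.restrict (Ioi 0)))
    (hH : AEMeasurable H (volume.restrict (Ioi 0))) :
    ∫⁻ r in Ioi 0, F r * ∫⁻ s in Ioi r, H s = ∫⁻ s in Ioi 0, (∫⁻ r in Ioo 0 s, F r) * H s := by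
  set μ := volume.restrict (Ioi (0 : ℝ))
  have hIoi : ∀ r ∈ Ioi (0 : ℝ), ∫⁻ s in Ioi r, H s = ∫⁻ s, (Ioi r).indicator H s ∂μ := by
    intro r hr
    rw [lintegral_indicator measurableSet_Ioi, Measure.restrict_restrict measurableSet_Ioi,
      Ioi_inter_Ioi, max_eq_left (le_of_lt hr)]
  have hIoo : ∀ s, ∫⁻ r in Ioo 0 s, F r = ∫⁻ r, (Iio s).indicator F r ∂μ := by
    intro s
    rw [lintegral_indicator measurableSet_Iio, Measure.restrict_restrict measurableSet_Iio,
      Iio_inter_Ioi]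
  have hkernel : ∀ r s, F r * (Ioi r).indicator H s = (Iio s).indicator F r * H s := by
    intro r s
    by_cases h : r < s <;> simp [h]
  have hk : AEMeasurable (Function.uncurry fun r s => F r * (Ioi r).indicator H s) (μ.prod μ) := by
    have : (Function.uncurry fun r s => F r * (Ioi r).indicator H s)
        = {q : ℝ × ℝ | q.1 < q.2}.indicator fun q => F q.1 * H q.2 := by
      ext ⟨r, s⟩
      by_cases h : r < s <;> simp [h]
    rw [this]
    exact (hF.comp_fst.mul hH.comp_snd).indicator (measurableSet_lt measurable_fst measurable_snd)
  calc ∫⁻ r in Ioi 0, F r * ∫⁻ s in Ioi r, H s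
      = ∫⁻ r, ∫⁻ s, F r * (Ioi r).indicator H s ∂μ ∂μ := by
        refine setLIntegral_congr_fun measurableSet_Ioi fun r hr => ?_
        rw [hIoi r hr, lintegral_const_mul'' _ (hH.indicator measurableSet_Ioi)]
    _ = ∫⁻ s, ∫⁻ r, F r * (Ioi r).indicator H s ∂μ ∂μ := lintegral_lintegral_swap hk
    _ = ∫⁻ s in Ioi 0, (∫⁻ r in Ioo 0 s, F r) * H s := by
        refine lintegral_congr fun s => ?_
        simp_rw [hkernel]
        rw [hIoo, lintegral_mul_const'' _ (hF.indicator measurableSet_Iio)]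

theorem lintegral_weighted_hardy_le {p γ K : ℝ} (hp : 1 ≤ p) (hγ : 0 < γ) (hK : 0 ≤ K)
    {w : ℝ → ℝ} (hw : ∀ r, 0 < r → 0 ≤ w r) (hw_meas : AEMeasurable w (volume.restrict (Ioi 0)))
    (hdecay : ∀ r s, 0 < r → r ≤ s → w r ^ p * r ^ 2 ≤ K * (r / s) ^ (2 * γ) * (w s ^ p * s ^ 2))
    {f : ℝ → ℂ} (hf : AEMeasurable f (volume.restrict (Ioi 0))) :
    ∫⁻ r in Ioi 0, ENNReal.ofReal ((w r * ‖∫ s in Ioi r, f s / (s : ℂ)‖) ^ p * r)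
      ≤ ENNReal.ofReal ((p - 1) / γ) ^ (p - 1) * ENNReal.ofReal (K / γ) *
          ∫⁻ r in Ioi 0, ENNReal.ofReal ((w r * ‖f r‖) ^ p * r) := by
  set F : ℝ → ℝ≥0∞ := fun r => ENNReal.ofReal (w r ^ p * r ^ 2 * r ^ (-1 - γ))
  set H : ℝ → ℝ≥0∞ := fun s => ‖f s‖ₑ ^ p * ENNReal.ofReal (s ^ (γ - 1))
  set C := ENNReal.ofReal ((p - 1) / γ) ^ (p - 1)
  have hC : C ≠ ⊤ := ENNReal.rpow_ne_top_of_nonneg (sub_nonneg.2 hp) ENNReal.ofReal_ne_top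
  calc ∫⁻ r in Ioi 0, ENNReal.ofReal ((w r * ‖∫ s in Ioi r, f s / (s : ℂ)‖) ^ p * r)
      ≤ ∫⁻ r in Ioi 0, C * (F r * ∫⁻ s in Ioi r, H s) :=
        setLIntegral_mono' measurableSet_Ioi fun r hr =>
          ofReal_mul_norm_setIntegral_Ioi_div_rpow_le hp hγ (hw r hr) hr
            (hf.mono_measure (Measure.restrict_mono (Ioi_subset_Ioi (le_of_lt hr)) le_rfl))
    _ = C * ∫⁻ s in Ioi 0, (∫⁻ r in Ioo 0 s, F r) * H s := by
        rw [lintegral_const_mul' _ _ hC,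
          lintegral_Ioi_mul_lintegral_Ioi_eq (by fun_prop) (by fun_prop)]
    _ ≤ C * ∫⁻ s in Ioi 0, ENNReal.ofReal (K / γ) * ENNReal.ofReal ((w s * ‖f s‖) ^ p * s) :=
        mul_le_mul_right (setLIntegral_mono' measurableSet_Ioi fun s hs =>
          lintegral_Ioo_weight_mul_enorm_rpow_le (zero_le_one.trans hp) hγ hK hw hdecay hs (f s)) _
    _ = C * ENNReal.ofReal (K / γ) * ∫⁻ r in Ioi 0, ENNReal.ofReal ((w r * ‖f r‖) ^ p * r) := by
        rw [lintegral_const_mul' _ _ ENNReal.ofReal_ne_top, mul_assoc]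

lemma integral_le_toReal_mul_integral_of_lintegral_le {α : Type*} [MeasurableSpace α]
    {μ : Measure α} {f g : α → ℝ} {C : ℝ≥0∞} (hC : C ≠ ⊤) (hf : 0 ≤ᵐ[μ] f) (hg : 0 ≤ᵐ[μ] g)
    (hgi : Integrable g μ)
    (h : ∫⁻ x, ENNReal.ofReal (f x) ∂μ ≤ C * ∫⁻ x, ENNReal.ofReal (g x) ∂μ) :
    ∫ x, f x ∂μ ≤ C.toReal * ∫ x, g x ∂μ := by
  rw [← ofReal_integral_eq_lintegral_ofReal hgi hg] at h
  calc ∫ x, f x ∂μ ≤ ‖∫ x, f x ∂μ‖ := Real.le_norm_self _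
    _ ≤ (∫⁻ x, ENNReal.ofReal ‖f x‖ ∂μ).toReal := norm_integral_le_lintegral_norm f
    _ = (∫⁻ x, ENNReal.ofReal (f x) ∂μ).toReal := by
        rw [lintegral_congr_ae (hf.mono fun x hx => by rw [Real.norm_of_nonneg hx])]
    _ ≤ (C * ENNReal.ofReal (∫ x, g x ∂μ)).toReal :=
        ENNReal.toReal_mono (ENNReal.mul_ne_top hC ENNReal.ofReal_ne_top) h
    _ = C.toReal * ∫ x, g x ∂μ := by
        rw [ENNReal.toReal_mul, ENNReal.toReal_ofReal (integral_nonneg_of_ae hg)]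

/-- Weighted Hardy-type bound for `[r∂_r]⁻¹` on `L^p((0,∞), r dr)`, for weights `w` such that
`g(r) = w(r) r^{2/p}` is nondecreasing with `g(r) ≤ (1−ε) g(2r)`. -/
theorem hardy_rdr_weighted (p : ℝ) (hp : 1 ≤ p) (ε : ℝ) (hε0 : 0 < ε) (hε1 : ε < 1)
    (w : ℝ → ℝ) (hw : ∀ r : ℝ, 0 < r → 0 < w r)
    (hmono : ∀ r s : ℝ, 0 < r → r ≤ s → w r * r ^ (2/p) ≤ w s * s ^ (2/p))
    (hdoub : ∀ r : ℝ, 0 < r → w r * r ^ (2/p) ≤ (1 - ε) * (w (2*r) * (2*r) ^ (2/p))) :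
    ∃ C : ℝ, ∀ f : ℝ → ℂ, Measurable f →
      IntegrableOn (fun r => (w r * ‖f r‖) ^ p * r) (Ioi 0) →
      (∫ r in Ioi (0:ℝ), (w r * ‖∫ s in Ioi r, f s / (s:ℂ)‖) ^ p * r)
        ≤ C * ∫ r in Ioi (0:ℝ), (w r * ‖f r‖) ^ p * r := by
  have hw' : ∀ r, 0 < r → 0 ≤ w r := fun r hr => (hw r hr).le
  obtain ⟨γ, hγ, hdecay⟩ :=
    exists_rpow_mul_sq_le_of_doubling (one_pos.trans_le hp) hε0 hε1 hw' hmono hdoub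
  have hK : 0 ≤ (1 - ε)⁻¹ ^ p := Real.rpow_nonneg (inv_nonneg.2 (sub_nonneg.2 hε1.le)) p
  have hC : ENNReal.ofReal ((p - 1) / γ) ^ (p - 1) * ENNReal.ofReal ((1 - ε)⁻¹ ^ p / γ) ≠ ⊤ :=
    ENNReal.mul_ne_top (ENNReal.rpow_ne_top_of_nonneg (sub_nonneg.2 hp) ENNReal.ofReal_ne_top)
      ENNReal.ofReal_ne_top
  refine ⟨_, fun f hf hint => integral_le_toReal_mul_integral_of_lintegral_le hC ?_ ?_ hint
    (lintegral_weighted_hardy_le hp hγ hK hw'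
      (aemeasurable_of_monotoneOn_mul_rpow fun r hr s _ hrs => hmono r s hr hrs) hdecay
      hf.aemeasurable)⟩
  all_goals
    filter_upwards [ae_restrict_mem measurableSet_Ioi] with r (hr : 0 < r)
    have := hw r hr
    positivity
end

section
/- There exists a universal constant C such that for every continuously differentiable h : (0,∞) → ℂ: Σ_{m ∈ ℤ} ( sup_{2^{m−1} < r < 2^{m+1}} |h(r)| )² ≤ C ( ∫₀^∞ |h′(r)|² r dr + ∫₀^∞ |h(r)|²/r² · r dr ), whenever the right-hand side is finite. -/
/-!
On an interval `(a, b) ⊂ (0, ∞)`, the fundamental theorem of calculus for `‖h‖²` together with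
`2‖h‖‖h'‖ ≤ ‖h'‖² t + ‖h‖² / t` gives `‖h r‖² ≤ ‖h s‖² + G`, where `G` is the energy of `h` on
`(a, b)`. Averaging over `s` against `ds / s` yields `‖h r‖² ≤ G / log (b / a) + G ≤ 2 G` once
`b / a ≥ e`. The dyadic annuli have `b / a = 4` and cover every point of `(0, ∞)` at most twice,
so summing over `m` gives the embedding with `C = 4`.
-/

open MeasureTheory Set Function

open scoped InnerProductSpace

variable {E : Type*} [NormedAddCommGroup E]

lemma sq_sSup_image_norm_le {α : Type*} {f : α → E} {s : Set α} {c : ℝ} (hs : s.Nonempty)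
    (hc : ∀ x ∈ s, ‖f x‖ ^ 2 ≤ c) : sSup ((fun x => ‖f x‖) '' s) ^ 2 ≤ c := by
  obtain ⟨x₀, hx₀⟩ := hs
  have hc₀ : 0 ≤ c := (sq_nonneg _).trans (hc x₀ hx₀)
  have hle : sSup ((fun x => ‖f x‖) '' s) ≤ √c :=
    Real.sSup_le (forall_mem_image.2 fun x hx => Real.le_sqrt_of_sq_le (hc x hx))
      (Real.sqrt_nonneg c)
  have hnonneg : 0 ≤ sSup ((fun x => ‖f x‖) '' s) :=
    Real.sSup_nonneg (forall_mem_image.2 fun x _ => norm_nonneg _)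
  calc sSup ((fun x => ‖f x‖) '' s) ^ 2 ≤ √c ^ 2 := pow_le_pow_left₀ hnonneg hle 2
    _ = c := Real.sq_sqrt hc₀

noncomputable def energyDensity (h h' : ℝ → E) (t : ℝ) : ℝ :=
  ‖h' t‖ ^ 2 * t + ‖h t‖ ^ 2 / t ^ 2 * t

lemma energyDensity_nonneg (h h' : ℝ → E) {t : ℝ} (ht : 0 ≤ t) : 0 ≤ energyDensity h h' t := by
  unfold energyDensity; positivity

variable [InnerProductSpace ℝ E]

lemma abs_two_mul_inner_le (x v : E) {t : ℝ} (ht : 0 < t) :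
    |2 * ⟪x, v⟫_ℝ| ≤ ‖v‖ ^ 2 * t + ‖x‖ ^ 2 / t ^ 2 * t := by
  have hcs : |⟪x, v⟫_ℝ| ≤ ‖x‖ * ‖v‖ := abs_real_inner_le_norm x v
  have hamgm : 2 * (‖x‖ * ‖v‖) ≤ ‖v‖ ^ 2 * t + ‖x‖ ^ 2 / t ^ 2 * t := by
    have : ‖v‖ ^ 2 * t + ‖x‖ ^ 2 / t ^ 2 * t - 2 * (‖x‖ * ‖v‖) = (‖v‖ * t - ‖x‖) ^ 2 / t := by
      field_simp; ring
    nlinarith [div_nonneg (sq_nonneg (‖v‖ * t - ‖x‖)) ht.le]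
  rw [abs_mul, abs_two]
  linarith

section Interval

variable {h h' : ℝ → E} {a b : ℝ}

lemma norm_sq_sub_norm_sq_le_integral_energyDensity (ha : 0 < a)
    (hd : ∀ t ∈ Ioo a b, HasDerivAt h (h' t) t) (hc : ContinuousOn h' (Ioo a b))
    (hint : IntegrableOn (energyDensity h h') (Ioo a b)) {r s : ℝ}
    (hr : r ∈ Ioo a b) (hs : s ∈ Ioo a b) :
    ‖h r‖ ^ 2 - ‖h s‖ ^ 2 ≤ ∫ t in Ioo a b, energyDensity h h' t := by
  have hsub : uIcc s r ⊆ Ioo a b := ordConnected_Ioo.uIcc_subset hs hr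
  have hpos : ∀ t ∈ Ioo a b, 0 < t := fun t ht => ha.trans ht.1
  have hderiv : ∀ t ∈ uIcc s r, HasDerivAt (‖h ·‖ ^ 2) (2 * ⟪h t, h' t⟫_ℝ) t :=
    fun t ht => (hd t (hsub ht)).norm_sq
  have hcont_h : ContinuousOn h (uIcc s r) :=
    fun t ht => (hd t (hsub ht)).continuousAt.continuousWithinAt
  have hcont : ContinuousOn (fun t => 2 * ⟪h t, h' t⟫_ℝ) (uIcc s r) :=
    continuousOn_const.mul (hcont_h.inner (hc.mono hsub))
  calc ‖h r‖ ^ 2 - ‖h s‖ ^ 2 = ∫ t in s..r, 2 * ⟪h t, h' t⟫_ℝ :=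
        (intervalIntegral.integral_eq_sub_of_hasDerivAt hderiv hcont.intervalIntegrable).symm
    _ ≤ ‖∫ t in s..r, 2 * ⟪h t, h' t⟫_ℝ‖ := le_abs_self _
    _ ≤ ∫ t in uIoc s r, ‖2 * ⟪h t, h' t⟫_ℝ‖ :=
        intervalIntegral.norm_integral_le_integral_norm_uIoc
    _ ≤ ∫ t in uIoc s r, energyDensity h h' t :=
        setIntegral_mono_on (hcont.norm.integrableOn_compact isCompact_uIcc |>.mono_set
          uIoc_subset_uIcc) (hint.mono_set (uIoc_subset_uIcc.trans hsub)) measurableSet_uIoc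
          fun t ht => abs_two_mul_inner_le _ _ (hpos t (hsub (uIoc_subset_uIcc ht)))
    _ ≤ ∫ t in Ioo a b, energyDensity h h' t :=
        setIntegral_mono_set hint
          ((ae_restrict_iff' measurableSet_Ioo).2 <| ae_of_all _ fun t ht =>
            energyDensity_nonneg h h' (hpos t ht).le)
          (uIoc_subset_uIcc.trans hsub).eventuallyLE

lemma norm_sq_le_two_mul_integral_energyDensity (ha : 0 < a) (hab : 1 ≤ Real.log (b / a))
    (hd : ∀ t ∈ Ioo a b, HasDerivAt h (h' t) t) (hc : ContinuousOn h' (Ioo a b))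
    (hi₁ : IntegrableOn (fun t => ‖h' t‖ ^ 2 * t) (Ioo a b))
    (hi₂ : IntegrableOn (fun t => ‖h t‖ ^ 2 / t ^ 2 * t) (Ioo a b)) {r : ℝ} (hr : r ∈ Ioo a b) :
    ‖h r‖ ^ 2 ≤ 2 * ∫ t in Ioo a b, energyDensity h h' t := by
  have hint : IntegrableOn (energyDensity h h') (Ioo a b) := hi₁.add hi₂
  have hpos : ∀ t ∈ Ioo a b, 0 < t := fun t ht => ha.trans ht.1
  set G := ∫ t in Ioo a b, energyDensity h h' t
  set L := Real.log (b / a)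
  have hinv : IntegrableOn (fun t : ℝ => t⁻¹) (Ioo a b) :=
    (continuousOn_inv₀.mono fun t ht => (ha.trans_le ht.1).ne').integrableOn_Icc.mono_set
      Ioo_subset_Icc_self
  have hlog : ∫ t in Ioo a b, t⁻¹ = L := by
    rw [← integral_Ioc_eq_integral_Ioo, ← intervalIntegral.integral_of_le (hr.1.trans hr.2).le,
      integral_inv_of_pos ha (ha.trans (hr.1.trans hr.2))]
  have hG₀ : 0 ≤ G := setIntegral_nonneg measurableSet_Ioo fun t ht =>
    energyDensity_nonneg h h' (hpos t ht).le
  have hG₂ : ∫ t in Ioo a b, ‖h t‖ ^ 2 / t ^ 2 * t ≤ G :=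
    setIntegral_mono_on hi₂ hint measurableSet_Ioo fun t ht =>
      le_add_of_nonneg_left (by have := hpos t ht; positivity)
  have havg : ‖h r‖ ^ 2 * L ≤ (∫ t in Ioo a b, ‖h t‖ ^ 2 / t ^ 2 * t) + G * L := by
    calc ‖h r‖ ^ 2 * L = ∫ t in Ioo a b, ‖h r‖ ^ 2 * t⁻¹ := by rw [integral_const_mul, hlog]
      _ ≤ ∫ t in Ioo a b, (‖h t‖ ^ 2 / t ^ 2 * t + G * t⁻¹) :=
          setIntegral_mono_on (hinv.const_mul _) (hi₂.add (hinv.const_mul _)) measurableSet_Ioo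
            fun t ht => by
              have hft := norm_sq_sub_norm_sq_le_integral_energyDensity ha hd hc hint hr ht
              have ht₀ := hpos t ht
              rw [show ‖h t‖ ^ 2 / t ^ 2 * t = ‖h t‖ ^ 2 * t⁻¹ by field_simp]
              nlinarith [inv_pos.2 ht₀]
      _ = _ := by rw [integral_add hi₂ (hinv.const_mul _), integral_const_mul, hlog]
  nlinarith

end Interval

section Dyadic

variable {b : ℝ}

lemma iUnion_Ioc_zpow (hb : 1 < b) : ⋃ n : ℤ, Ioc (b ^ n) (b ^ (n + 1)) = Ioi 0 := by
  ext x
  refine ⟨fun hx => ?_, fun hx => mem_iUnion.2 (exists_mem_Ioc_zpow hx hb)⟩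
  obtain ⟨n, hn⟩ := mem_iUnion.1 hx
  exact (zpow_pos (zero_lt_one.trans hb) n).trans hn.1

lemma lintegral_Ioi_zero_eq_tsum_Ioc_zpow (hb : 1 < b) (f : ℝ → ENNReal) :
    ∫⁻ t in Ioi 0, f t = ∑' n : ℤ, ∫⁻ t in Ioc (b ^ n) (b ^ (n + 1)), f t := by
  have hdisj : Pairwise (Disjoint on fun n : ℤ => Ioc (b ^ n) (b ^ (n + 1))) := by
    simpa only [Order.succ_eq_add_one] using (zpow_right_mono₀ hb.le).pairwise_disjoint_on_Ioc_succ
  rw [← iUnion_Ioc_zpow hb, lintegral_iUnion (fun _ => measurableSet_Ioc) hdisj]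

lemma tsum_lintegral_Ioo_zpow_le (hb : 1 < b) (f : ℝ → ENNReal) :
    ∑' m : ℤ, ∫⁻ t in Ioo (b ^ (m - 1)) (b ^ (m + 1)), f t ≤ 2 * ∫⁻ t in Ioi 0, f t := by
  set g : ℤ → ENNReal := fun n => ∫⁻ t in Ioc (b ^ n) (b ^ (n + 1)), f t
  have hcover : ∀ m : ℤ, Ioo (b ^ (m - 1)) (b ^ (m + 1)) ⊆
      Ioc (b ^ (m - 1)) (b ^ (m - 1 + 1)) ∪ Ioc (b ^ m) (b ^ (m + 1)) := by
    intro m t ht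
    rw [sub_add_cancel]
    rcases le_or_gt t (b ^ m) with htm | htm
    · exact Or.inl ⟨ht.1, htm⟩
    · exact Or.inr ⟨htm, ht.2.le⟩
  have hshift : ∑' m : ℤ, g (m - 1) = ∑' m : ℤ, g m := (Equiv.subRight 1).tsum_eq g
  calc ∑' m : ℤ, ∫⁻ t in Ioo (b ^ (m - 1)) (b ^ (m + 1)), f t ≤ ∑' m : ℤ, (g (m - 1) + g m) :=
        ENNReal.tsum_le_tsum fun m =>
          (lintegral_mono_set (hcover m)).trans (lintegral_union_le _ _ _)
    _ = 2 * ∫⁻ t in Ioi 0, f t := by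
        rw [ENNReal.tsum_add, hshift, lintegral_Ioi_zero_eq_tsum_Ioc_zpow hb, two_mul]

end Dyadic

lemma sq_sSup_dyadic_annulus_le {h h' : ℝ → E} (hd : ∀ r ∈ Ioi (0:ℝ), HasDerivAt h (h' r) r)
    (hc : ContinuousOn h' (Ioi 0)) (hi₁ : IntegrableOn (fun r => ‖h' r‖ ^ 2 * r) (Ioi 0))
    (hi₂ : IntegrableOn (fun r => ‖h r‖ ^ 2 / r ^ 2 * r) (Ioi 0)) (m : ℤ) :
    sSup ((fun r => ‖h r‖) '' Ioo ((2:ℝ) ^ (m - 1)) (2 ^ (m + 1))) ^ 2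
      ≤ 2 * ∫ t in Ioo ((2:ℝ) ^ (m - 1)) (2 ^ (m + 1)), energyDensity h h' t := by
  have ha : (0:ℝ) < 2 ^ (m - 1) := zpow_pos two_pos _
  have hsub : Ioo ((2:ℝ) ^ (m - 1)) (2 ^ (m + 1)) ⊆ Ioi 0 := fun t ht => ha.trans ht.1
  have hne : (Ioo ((2:ℝ) ^ (m - 1)) (2 ^ (m + 1))).Nonempty :=
    nonempty_Ioo.2 (zpow_lt_zpow_right₀ one_lt_two (by omega))
  have hlog : 1 ≤ Real.log ((2:ℝ) ^ (m + 1) / 2 ^ (m - 1)) := by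
    rw [← zpow_sub₀ two_ne_zero, show m + 1 - (m - 1) = 2 by ring,
      Real.le_log_iff_exp_le (by norm_num)]
    linarith [Real.exp_one_lt_d9]
  exact sq_sSup_image_norm_le hne fun r hr =>
    norm_sq_le_two_mul_integral_energyDensity ha hlog (fun t ht => hd t (hsub ht)) (hc.mono hsub)
      (hi₁.mono_set hsub) (hi₂.mono_set hsub) hr

/-- Square-summed dyadic `L^∞` embedding: `‖h‖_{ℓ²L^∞} ≲ ‖h‖_{Ḣ¹_e}` over the dyadic annuli
`A_m = (2^{m−1}, 2^{m+1})`. -/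
theorem dyadic_linf_embedding :
    ∃ C : ℝ, ∀ h h' : ℝ → ℂ,
      (∀ r ∈ Ioi (0:ℝ), HasDerivAt h (h' r) r) →
      ContinuousOn h' (Ioi 0) →
      IntegrableOn (fun r => ‖h' r‖^2 * r) (Ioi 0) →
      IntegrableOn (fun r => ‖h r‖^2 / r^2 * r) (Ioi 0) →
      (∑' m : ℤ, ENNReal.ofReal
          ((sSup ((fun r => ‖h r‖) '' Ioo ((2:ℝ)^(m-1)) ((2:ℝ)^(m+1))))^2))
        ≤ ENNReal.ofReal (C * ((∫ r in Ioi (0:ℝ), ‖h' r‖^2 * r)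
            + ∫ r in Ioi (0:ℝ), ‖h r‖^2 / r^2 * r)) := by
  refine ⟨4, fun h h' hd hc hi₁ hi₂ => ?_⟩
  have hint : IntegrableOn (energyDensity h h') (Ioi 0) := hi₁.add hi₂
  have hnonneg : ∀ᵐ t ∂volume.restrict (Ioi 0), 0 ≤ energyDensity h h' t :=
    (ae_restrict_iff' measurableSet_Ioi).2 <| ae_of_all _ fun t (ht : 0 < t) =>
      energyDensity_nonneg h h' ht.le
  have hannulus : ∀ m : ℤ, ENNReal.ofReal
      (sSup ((fun r => ‖h r‖) '' Ioo ((2:ℝ) ^ (m - 1)) (2 ^ (m + 1))) ^ 2)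
      ≤ 2 * ∫⁻ t in Ioo ((2:ℝ) ^ (m - 1)) (2 ^ (m + 1)), ENNReal.ofReal (energyDensity h h' t) := by
    intro m
    have hsub : Ioo ((2:ℝ) ^ (m - 1)) (2 ^ (m + 1)) ⊆ Ioi 0 :=
      fun t ht => (zpow_pos two_pos _).trans ht.1
    rw [← ofReal_integral_eq_lintegral_ofReal (hint.mono_set hsub)
      (ae_restrict_of_ae_restrict_of_subset hsub hnonneg), ← ENNReal.ofReal_ofNat 2,
      ← ENNReal.ofReal_mul zero_le_two]
    exact ENNReal.ofReal_le_ofReal (sq_sSup_dyadic_annulus_le hd hc hi₁ hi₂ m)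
  calc _ ≤ ∑' m : ℤ, 2 * ∫⁻ t in Ioo ((2:ℝ) ^ (m - 1)) (2 ^ (m + 1)),
          ENNReal.ofReal (energyDensity h h' t) := ENNReal.tsum_le_tsum hannulus
    _ = 2 * ∑' m : ℤ, ∫⁻ t in Ioo ((2:ℝ) ^ (m - 1)) (2 ^ (m + 1)),
          ENNReal.ofReal (energyDensity h h' t) := ENNReal.tsum_mul_left
    _ ≤ 2 * (2 * ∫⁻ t in Ioi 0, ENNReal.ofReal (energyDensity h h' t)) := by
        gcongr; exact tsum_lintegral_Ioo_zpow_le one_lt_two _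
    _ = _ := by
        rw [← ofReal_integral_eq_lintegral_ofReal hint hnonneg, ← mul_assoc,
          ← integral_add hi₁ hi₂, ENNReal.ofReal_mul zero_le_four]
        norm_num [energyDensity]
end
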